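/- arXiv:1104.4055 — 2 statements merged into one kernel-verified Lean document; each statement's English description precedes it below -/
import Mathlib

section
/- For every complex number α and every integer n ≥ 0 the polynomial identity (2α+1) p_n(x;α+1) = −x p_n''(x;α) + (2x − 1 − 2α) p_n'(x;α) + (1+2α) p_n(x;α) holds in ℂ[x]. -/
/-!
Let `L_α = pseqStep α` be the operator with `p_{n+1} = L_α p_n` and `M_α = alphaShift α` the
operator on the right-hand side. A direct computation with derivatives up to order four shows the intertwining relation
`M_α ∘ L_α = L_{α+1} ∘ M_α` on all polynomials. Since `p_n(α) = L_α^n 1` and `M_α 1 = 2α + 1`,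
induction on `n` gives `M_α p_n(α) = (2α + 1) p_n(α + 1)`.
-/

open Polynomial

/-- The polynomials `p_n(x; α)` defined recursively by
`p_0 = 1`, `p_{n+1} = x² p_n'' − x(2x − 1 − 2α) p_n' − ((2α+1)x − α²) p_n`. -/
noncomputable def pseq (α : ℂ) : ℕ → ℂ[X]
  | 0 => 1
  | n + 1 =>
      X ^ 2 * derivative (derivative (pseq α n))
        - X * (2 * X - C (1 + 2 * α)) * derivative (pseq α n)
        - (C (2 * α + 1) * X - C (α ^ 2)) * pseq α n

section Operators

variable {R : Type*} [CommRing R]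

noncomputable def pseqStep (α : R) (p : R[X]) : R[X] :=
  X ^ 2 * derivative (derivative p) - X * (2 * X - C (1 + 2 * α)) * derivative p
    - (C (2 * α + 1) * X - C (α ^ 2)) * p

noncomputable def alphaShift (α : R) (p : R[X]) : R[X] :=
  -X * derivative (derivative p) + (2 * X - C (1 + 2 * α)) * derivative p + C (1 + 2 * α) * p

theorem pseqStep_C_mul (α c : R) (p : R[X]) : pseqStep α (C c * p) = C c * pseqStep α p := by
  simp only [pseqStep, derivative_C_mul]
  ring

theorem alphaShift_one (α : R) : alphaShift α (1 : R[X]) = C (2 * α + 1) := by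
  simp only [alphaShift, derivative_one, derivative_zero, mul_zero, add_zero, zero_add, mul_one]
  rw [add_comm]

theorem alphaShift_pseqStep (α : R) (p : R[X]) :
    alphaShift α (pseqStep α p) = pseqStep (α + 1) (alphaShift α p) := by
  simp only [alphaShift, pseqStep, derivative_add, derivative_sub, derivative_mul, derivative_neg,
    derivative_X, derivative_C, derivative_X_sq, derivative_one, derivative_ofNat,
    derivative_zero]
  simp only [C_add, C_mul, C_1, C_pow, C_ofNat]
  ring

end Operators

theorem pseq_succ (α : ℂ) (n : ℕ) : pseq α (n + 1) = pseqStep α (pseq α n) := rfl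

theorem stmt3 (α : ℂ) (n : ℕ) :
    C (2 * α + 1) * pseq (α + 1) n
      = -X * derivative (derivative (pseq α n))
        + (2 * X - C (1 + 2 * α)) * derivative (pseq α n)
        + C (1 + 2 * α) * pseq α n := by
  change C (2 * α + 1) * pseq (α + 1) n = alphaShift α (pseq α n)
  induction n with
  | zero => simp only [pseq, mul_one, alphaShift_one]
  | succ n ih => rw [pseq_succ, pseq_succ, ← pseqStep_C_mul, ih, alphaShift_pseqStep]
end

section
/- Let α be a complex number with Re(α) > −1/2. Then the monic polynomial sequence {P_n(·;α)}_{n≥0} is not orthogonal with respect to any regular form: there exist no linear functional v : ℂ[x] → ℂ and no sequence of nonzero complex numbers (k_n)_{n≥0} such that v( P_n(·;α) · P_m(·;α) ) = k_n δ_{n,m} for all n, m ≥ 0. -/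
open Polynomial

/-- The monic normalization `P_n(x;α) = p_n(x;α) / ((−2)ⁿ (α+1/2)_n)`. -/
noncomputable def Pmonic (α : ℂ) (n : ℕ) : ℂ[X] :=
  ((-2 : ℂ) ^ n * (ascPochhammer ℂ n).eval (α + 1 / 2))⁻¹ • pseq α n

/-!
Were the `P_n` orthogonal for a regular form `v`, then `v` would annihilate `p_1, …, p_4`, which
determines its moments up to order four: `v(xⁿ) = ((α)_n)² / (2ⁿ (α + 1/2)_n) · v(1)`.
Substituting them, `v(x p_1)`, `v(x p_2)` and `v(x p_3)` are `α² v(1)` times explicit polynomials in `α`.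
Orthogonality makes the first of these nonzero, so `α ≠ 0`, and the other two zero, which forces `α`
to be a common root of two coprime polynomials.
-/

structure IsOrthogonalSequence {K : Type*} [Field K] (v : K[X] →ₗ[K] K) (P : ℕ → K[X]) :
    Prop where
  map_mul_of_ne : ∀ {n m : ℕ}, n ≠ m → v (P n * P m) = 0
  map_mul_self_ne_zero : ∀ n, v (P n * P n) ≠ 0

namespace IsOrthogonalSequence

variable {K : Type*} [Field K] {v : K[X] →ₗ[K] K} {P : ℕ → K[X]}

theorem of_eq_ite {k : ℕ → K} (hk : ∀ n, k n ≠ 0)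
    (h : ∀ n m, v (P n * P m) = if n = m then k n else 0) : IsOrthogonalSequence v P where
  map_mul_of_ne hnm := by rw [h, if_neg hnm]
  map_mul_self_ne_zero n := by rw [h, if_pos rfl]; exact hk n

theorem smul (hP : IsOrthogonalSequence v P) {c : ℕ → K} (hc : ∀ n, c n ≠ 0) :
    IsOrthogonalSequence v fun n => c n • P n where
  map_mul_of_ne hnm := by rw [smul_mul_smul_comm, map_smul, hP.map_mul_of_ne hnm, smul_zero]
  map_mul_self_ne_zero n := by
    rw [smul_mul_smul_comm, map_smul, smul_eq_mul]
    exact mul_ne_zero (mul_ne_zero (hc n) (hc n)) (hP.map_mul_self_ne_zero n)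

theorem map_eq_zero (hP : IsOrthogonalSequence v P) (h0 : P 0 = 1) {n : ℕ} (hn : n ≠ 0) :
    v (P n) = 0 := by
  simpa [h0] using hP.map_mul_of_ne hn.symm

end IsOrthogonalSequence

theorem ascPochhammer_eval_ne_zero_of_re_pos {z : ℂ} (hz : 0 < z.re) (n : ℕ) :
    (ascPochhammer ℂ n).eval z ≠ 0 := by
  rw [Ne, ascPochhammer_eval_eq_zero_iff]
  rintro ⟨k, -, hk⟩
  have hre := congrArg Complex.re hk
  simp only [Complex.natCast_re, Complex.neg_re] at hre
  linarith [k.cast_nonneg (α := ℝ)]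

theorem two_mul_add_odd_ne_zero {α : ℂ} (hα : -(1 / 2 : ℝ) < α.re) (k : ℕ) :
    2 * α + (2 * k + 1) ≠ 0 := by
  intro h
  have hre := congrArg Complex.re h
  simp only [Complex.add_re, Complex.mul_re, Complex.natCast_re, Complex.natCast_im] at hre
  norm_num at hre
  linarith [k.cast_nonneg (α := ℝ)]

section Pseq

variable (α : ℂ)

theorem pseq_zero : pseq α 0 = 1 := rfl

theorem pseq_succ_s18 (n : ℕ) : pseq α (n + 1) =
    X ^ 2 * derivative (derivative (pseq α n)) - X * (2 * X - C (1 + 2 * α)) * derivative (pseq α n)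
      - (C (2 * α + 1) * X - C (α ^ 2)) * pseq α n := rfl

theorem pseq_one : pseq α 1 = C (α ^ 2) - C (2 * α + 1) * X := by
  simp only [pseq_succ_s18, pseq_zero, derivative_one, derivative_zero]
  ring

theorem pseq_two : pseq α 2 =
    C (α ^ 4) - C ((α + 1) ^ 4 - α ^ 4) * X + C ((2 * α + 1) * (2 * α + 3)) * X ^ 2 := by
  rw [pseq_succ_s18 α 1, pseq_one]
  simp only [derivative_sub, derivative_C_mul_X, derivative_C, derivative_zero]
  simp only [map_add, map_sub, map_mul, map_pow, map_ofNat, C_1]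
  ring

theorem pseq_three : pseq α 3 =
    C (α ^ 6) - C ((α + 1) ^ 6 - α ^ 6) * X
      + C (15 + 58 * α + 77 * α ^ 2 + 48 * α ^ 3 + 12 * α ^ 4) * X ^ 2
      - C ((2 * α + 1) * (2 * α + 3) * (2 * α + 5)) * X ^ 3 := by
  rw [pseq_succ_s18 α 2, pseq_two]
  simp only [derivative_add, derivative_sub, derivative_C_mul_X, derivative_C,
    derivative_C_mul_X_pow, derivative_zero]
  simp only [map_add, map_sub, map_mul, map_pow, map_ofNat, map_natCast, C_1]
  ring

theorem pseq_four : pseq α 4 =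
    C (α ^ 8) - C ((α + 1) ^ 8 - α ^ 8) * X
      + C (63 + 312 * α + 612 * α ^ 2 + 648 * α ^ 3 + 402 * α ^ 4 + 144 * α ^ 5 + 24 * α ^ 6) * X ^ 2
      - C (210 + 824 * α + 1116 * α ^ 2 + 728 * α ^ 3 + 240 * α ^ 4 + 32 * α ^ 5) * X ^ 3
      + C ((2 * α + 1) * (2 * α + 3) * (2 * α + 5) * (2 * α + 7)) * X ^ 4 := by
  rw [pseq_succ_s18 α 3, pseq_three]
  simp only [derivative_add, derivative_sub, derivative_C_mul_X, derivative_C,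
    derivative_C_mul_X_pow, derivative_zero]
  simp only [map_add, map_sub, map_mul, map_pow, map_ofNat, map_natCast, C_1]
  ring

theorem pseq_eq_smul_Pmonic {n : ℕ} (h : (ascPochhammer ℂ n).eval (α + 1 / 2) ≠ 0) :
    pseq α n = ((-2 : ℂ) ^ n * (ascPochhammer ℂ n).eval (α + 1 / 2)) • Pmonic α n := by
  rw [Pmonic, smul_smul, mul_inv_cancel₀ (mul_ne_zero (pow_ne_zero _ (by norm_num)) h), one_smul]

end Pseq

section LinearFunctional

variable {R : Type*} [CommSemiring R] (v : R[X] →ₗ[R] R)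

theorem map_C_mul_eq_mul (a : R) (p : R[X]) : v (C a * p) = a * v p := by
  rw [C_mul', map_smul, smul_eq_mul]

theorem map_C_eq_mul_map_one (a : R) : v (C a) = a * v 1 := by
  rw [← map_C_mul_eq_mul, mul_one]

end LinearFunctional

section Moments

variable {α : ℂ} (v : ℂ[X] →ₗ[ℂ] ℂ)

theorem map_pseq_one_mul (p : ℂ[X]) :
    v (pseq α 1 * p) = α ^ 2 * v p - (2 * α + 1) * v (X * p) := by
  rw [pseq_one, sub_mul, map_sub, map_C_mul_eq_mul, mul_assoc, map_C_mul_eq_mul]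

variable {v}

theorem moment_one (hv : ∀ n, n ≠ 0 → v (pseq α n) = 0) : (2 * α + 1) * v X = α ^ 2 * v 1 := by
  have h1 := hv 1 one_ne_zero
  simp only [pseq_one, map_sub v, map_C_mul_eq_mul, map_C_eq_mul_map_one] at h1
  linear_combination -h1

theorem moment_two (hv : ∀ n, n ≠ 0 → v (pseq α n) = 0)
    (hα : ∀ k : ℕ, 2 * α + (2 * k + 1) ≠ 0) :
    (2 * α + 1) * (2 * α + 3) * v (X ^ 2) = (α * (α + 1)) ^ 2 * v 1 := by
  have h2 := hv 2 two_ne_zero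
  simp only [pseq_two, map_add v, map_sub v, map_C_mul_eq_mul, map_C_eq_mul_map_one] at h2
  refine mul_left_cancel₀ (hα 0) ?_
  linear_combination (2 * α + 1) * h2 + ((α + 1) ^ 4 - α ^ 4) * moment_one hv

theorem moment_three (hv : ∀ n, n ≠ 0 → v (pseq α n) = 0)
    (hα : ∀ k : ℕ, 2 * α + (2 * k + 1) ≠ 0) :
    (2 * α + 1) * (2 * α + 3) * (2 * α + 5) * v (X ^ 3) = (α * (α + 1) * (α + 2)) ^ 2 * v 1 := by
  have h3 := hv 3 three_ne_zero
  simp only [pseq_three, map_add v, map_sub v, map_C_mul_eq_mul, map_C_eq_mul_map_one] at h3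
  refine mul_left_cancel₀ (mul_ne_zero (hα 0) (hα 1)) ?_
  linear_combination -(2 * α + 1) * (2 * α + 3) * h3
    - ((α + 1) ^ 6 - α ^ 6) * (2 * α + 3) * moment_one hv
    + (15 + 58 * α + 77 * α ^ 2 + 48 * α ^ 3 + 12 * α ^ 4) * moment_two hv hα

theorem moment_four (hv : ∀ n, n ≠ 0 → v (pseq α n) = 0)
    (hα : ∀ k : ℕ, 2 * α + (2 * k + 1) ≠ 0) :
    (2 * α + 1) * (2 * α + 3) * (2 * α + 5) * (2 * α + 7) * v (X ^ 4)
      = (α * (α + 1) * (α + 2) * (α + 3)) ^ 2 * v 1 := by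
  have h4 := hv 4 four_ne_zero
  simp only [pseq_four, map_add v, map_sub v, map_C_mul_eq_mul, map_C_eq_mul_map_one] at h4
  refine mul_left_cancel₀ (mul_ne_zero (mul_ne_zero (hα 0) (hα 1)) (hα 2)) ?_
  linear_combination (2 * α + 1) * (2 * α + 3) * (2 * α + 5) * h4
    + ((α + 1) ^ 8 - α ^ 8) * (2 * α + 3) * (2 * α + 5) * moment_one hv
    - (63 + 312 * α + 612 * α ^ 2 + 648 * α ^ 3 + 402 * α ^ 4 + 144 * α ^ 5 + 24 * α ^ 6)
      * (2 * α + 5) * moment_two hv hα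
    + (210 + 824 * α + 1116 * α ^ 2 + 728 * α ^ 3 + 240 * α ^ 4 + 32 * α ^ 5) * moment_three hv hα

end Moments

section Obstruction

variable {α : ℂ} {v : ℂ[X] →ₗ[ℂ] ℂ}

theorem map_X_mul_pseq_one (hv : ∀ n, n ≠ 0 → v (pseq α n) = 0)
    (hα : ∀ k : ℕ, 2 * α + (2 * k + 1) ≠ 0) :
    (2 * α + 1) * (2 * α + 3) * v (X * pseq α 1) = -(α ^ 2 * (2 * α ^ 2 + 4 * α + 1)) * v 1 := by
  simp only [pseq_one, mul_sub X, X_mul_C, mul_left_comm X (C _), ← sq, map_sub v, map_C_mul_eq_mul]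
  linear_combination α ^ 2 * (2 * α + 3) * moment_one hv - (2 * α + 1) * moment_two hv hα

theorem map_X_mul_pseq_two (hv : ∀ n, n ≠ 0 → v (pseq α n) = 0)
    (hα : ∀ k : ℕ, 2 * α + (2 * k + 1) ≠ 0) :
    (2 * α + 1) * (2 * α + 3) * (2 * α + 5) * v (X * pseq α 2)
      = α ^ 2 * (8 * α ^ 4 + 40 * α ^ 3 + 64 * α ^ 2 + 36 * α + 7) * v 1 := by
  simp only [pseq_two, mul_add X, mul_sub X, X_mul_C, mul_left_comm X (C _), ← sq, ← pow_succ',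
    Nat.reduceAdd, map_add v, map_sub v, map_C_mul_eq_mul]
  linear_combination α ^ 4 * (2 * α + 3) * (2 * α + 5) * moment_one hv
    - ((α + 1) ^ 4 - α ^ 4) * (2 * α + 5) * moment_two hv hα
    + (2 * α + 1) * (2 * α + 3) * moment_three hv hα

theorem map_X_mul_pseq_three (hv : ∀ n, n ≠ 0 → v (pseq α n) = 0)
    (hα : ∀ k : ℕ, 2 * α + (2 * k + 1) ≠ 0) :
    (2 * α + 1) * (2 * α + 3) * (2 * α + 5) * (2 * α + 7) * v (X * pseq α 3)
      = -(α ^ 2 * (48 * α ^ 6 + 448 * α ^ 5 + 1568 * α ^ 4 + 2624 * α ^ 3 + 2222 * α ^ 2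
          + 936 * α + 155)) * v 1 := by
  simp only [pseq_three, mul_add X, mul_sub X, X_mul_C, mul_left_comm X (C _), ← sq, ← pow_succ',
    Nat.reduceAdd, map_add v, map_sub v, map_C_mul_eq_mul]
  linear_combination α ^ 6 * (2 * α + 3) * (2 * α + 5) * (2 * α + 7) * moment_one hv
    - ((α + 1) ^ 6 - α ^ 6) * (2 * α + 5) * (2 * α + 7) * moment_two hv hα
    + (15 + 58 * α + 77 * α ^ 2 + 48 * α ^ 3 + 12 * α ^ 4) * (2 * α + 7) * moment_three hv hα
    - (2 * α + 1) * (2 * α + 3) * (2 * α + 5) * moment_four hv hα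

theorem map_X_mul_pseq_eq_zero (hP : IsOrthogonalSequence v (pseq α)) (hα : 2 * α + 1 ≠ 0)
    {n : ℕ} (hn : 2 ≤ n) : v (X * pseq α n) = 0 := by
  have h := hP.map_mul_of_ne (show 1 ≠ n by omega)
  rw [map_pseq_one_mul, hP.map_eq_zero (pseq_zero α) (by omega), mul_zero, zero_sub,
    neg_eq_zero] at h
  exact (mul_eq_zero.mp h).resolve_left hα

theorem map_X_mul_pseq_one_ne_zero (hP : IsOrthogonalSequence v (pseq α)) :
    v (X * pseq α 1) ≠ 0 := by
  intro h0
  apply hP.map_mul_self_ne_zero 1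
  rw [map_pseq_one_mul, hP.map_eq_zero (pseq_zero α) one_ne_zero, h0, mul_zero, mul_zero, sub_zero]

end Obstruction

theorem sextic_ne_zero_of_quartic_eq_zero {α : ℂ}
    (hq : 8 * α ^ 4 + 40 * α ^ 3 + 64 * α ^ 2 + 36 * α + 7 = 0) :
    48 * α ^ 6 + 448 * α ^ 5 + 1568 * α ^ 4 + 2624 * α ^ 3 + 2222 * α ^ 2 + 936 * α + 155 ≠ 0 := by
  intro hr
  have : (3357 : ℂ) = 0 := by
    linear_combination (64096 + 250046 * α + 390578 * α ^ 2 + 286436 * α ^ 3 + 95120 * α ^ 4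
      + 11328 * α ^ 5) * hq - (2873 + 8830 * α + 7672 * α ^ 2 + 1888 * α ^ 3) * hr
  norm_num at this

theorem stmt18 (α : ℂ) (hα : -(1 / 2 : ℝ) < α.re) :
    ¬ ∃ (v : ℂ[X] →ₗ[ℂ] ℂ) (k : ℕ → ℂ),
        (∀ n : ℕ, k n ≠ 0) ∧
          ∀ n m : ℕ, v (Pmonic α n * Pmonic α m) = if n = m then k n else 0 := by
  rintro ⟨v, k, hk, hv⟩
  have hodd := two_mul_add_odd_ne_zero hα
  have hpoch := ascPochhammer_eval_ne_zero_of_re_pos (z := α + 1 / 2) (by norm_num; linarith)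
  have hP : IsOrthogonalSequence v (pseq α) := by
    convert (IsOrthogonalSequence.of_eq_ite hk hv).smul
      (fun n => mul_ne_zero (pow_ne_zero n (by norm_num : (-2 : ℂ) ≠ 0)) (hpoch n)) using 1
    exact funext fun n => pseq_eq_smul_Pmonic α (hpoch n)
  have hv0 : ∀ n, n ≠ 0 → v (pseq α n) = 0 := fun n => hP.map_eq_zero (pseq_zero α)
  have hv1 : v 1 ≠ 0 := by simpa [pseq_zero] using hP.map_mul_self_ne_zero 0
  have hodd0 : 2 * α + 1 ≠ 0 := by simpa using hodd 0
  have hα0 : α ≠ 0 := by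
    rintro rfl
    exact map_X_mul_pseq_one_ne_zero hP (by simpa using map_X_mul_pseq_one hv0 hodd)
  have hq := map_X_mul_pseq_two hv0 hodd
  rw [map_X_mul_pseq_eq_zero hP hodd0 le_rfl, mul_zero] at hq
  have hr := map_X_mul_pseq_three hv0 hodd
  rw [map_X_mul_pseq_eq_zero hP hodd0 (by norm_num), mul_zero] at hr
  exact sextic_ne_zero_of_quartic_eq_zero (by simpa [hα0, hv1] using hq.symm)
    (by simpa [hα0, hv1] using hr.symm)
end
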